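/- For every real r ≥ 3 and every t with 0 < t < 1, we have (1+t)^{r−1}(1−t)/(1 − t^r) − 1 ≥ t/3. -/

import Mathlib

/-!
Put `u = r - 3`, so that `(1 + t) ^ (r - 1) = (1 + t) ^ 2 * (1 + t) ^ u` and
`t ^ r = t ^ 3 * t ^ u`. At `u = 0` the claim is the polynomial identity
`(1 - t) (1 + t) ^ 2 - (1 + t / 3) (1 - t ^ 3) = t (1 - t) ^ 2 (2 + t) / 3 ≥ 0`.
For `u > 0`, the tangent-line bound `exp x ≥ 1 + x` together with `1 - x⁻¹ ≤ log x` gives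
`(1 + t) ^ u ≥ 1 + u t / (1 + t)` and `1 - t ^ u ≤ u (t⁻¹ - 1)`; the gain on the left,
`u t (1 - t) (1 + t)`, then dominates the loss on the right, `u t ^ 2 (1 - t) (1 + t / 3)`.
-/

open Real

lemma one_add_mul_log_le_rpow {x : ℝ} (hx : 0 < x) (u : ℝ) : 1 + u * log x ≤ x ^ u := by
  rw [rpow_def_of_pos hx, mul_comm]
  linarith [add_one_le_exp (log x * u)]

lemma one_add_mul_div_le_one_add_rpow {t u : ℝ} (ht : 0 < t) (hu : 0 ≤ u) :
    1 + u * (t / (1 + t)) ≤ (1 + t) ^ u := by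
  have hlog : t / (1 + t) ≤ log (1 + t) := by
    have h := one_sub_inv_le_log_of_pos (x := 1 + t) (by linarith)
    rwa [show 1 - (1 + t)⁻¹ = t / (1 + t) by field_simp; ring] at h
  calc 1 + u * (t / (1 + t)) ≤ 1 + u * log (1 + t) := by gcongr
    _ ≤ (1 + t) ^ u := one_add_mul_log_le_rpow (by linarith) u

lemma one_sub_rpow_le {t u : ℝ} (ht : 0 < t) (hu : 0 ≤ u) : 1 - t ^ u ≤ u * (t⁻¹ - 1) := by
  have := one_sub_inv_le_log_of_pos ht
  nlinarith [one_add_mul_log_le_rpow ht u]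

lemma one_add_div_three_mul_one_sub_rpow_le {r t : ℝ} (hr : 3 ≤ r) (ht0 : 0 < t) (ht1 : t < 1) :
    (1 + t / 3) * (1 - t ^ r) ≤ (1 + t) ^ (r - 1) * (1 - t) := by
  obtain ⟨u, hu, rfl⟩ : ∃ u, 0 ≤ u ∧ r = u + 3 := ⟨r - 3, by linarith, by ring⟩
  rw [show u + 3 - 1 = u + 2 by ring, rpow_add ht0, rpow_add (by linarith), rpow_ofNat, rpow_ofNat]
  have h1t : 0 < 1 - t := by linarith
  have gain : (1 + t) ^ 2 * (1 - t) + u * t * (1 + t) * (1 - t) ≤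
      (1 + t) ^ 2 * (1 - t) * (1 + t) ^ u := by
    have e : (1 + t) ^ 2 * (1 - t) * (1 + u * (t / (1 + t))) =
        (1 + t) ^ 2 * (1 - t) + u * t * (1 + t) * (1 - t) := by
      field_simp
    rw [← e]
    gcongr
    exact one_add_mul_div_le_one_add_rpow ht0 hu
  have loss : (1 + t / 3) * t ^ 3 * (1 - t ^ u) ≤ u * (1 + t / 3) * t ^ 2 * (1 - t) := by
    have e : (1 + t / 3) * t ^ 3 * (u * (t⁻¹ - 1)) = u * (1 + t / 3) * t ^ 2 * (1 - t) := by
      field_simp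
    rw [← e]
    gcongr
    exact one_sub_rpow_le ht0 hu
  have base : 0 ≤ t * (1 - t) ^ 2 * (2 + t) := by positivity
  have slope : 0 ≤ u * t * (1 - t) * (3 + 2 * t - t ^ 2) := by
    have : 0 ≤ 3 + 2 * t - t ^ 2 := by nlinarith
    positivity
  nlinarith

theorem stmt_13 (r t : ℝ) (hr : 3 ≤ r) (ht0 : 0 < t) (ht1 : t < 1) :
    (1 + t) ^ (r - 1) * (1 - t) / (1 - t ^ r) - 1 ≥ t / 3 := by
  have hden : 0 < 1 - t ^ r := sub_pos.2 (rpow_lt_one ht0.le ht1 (by linarith))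
  rw [ge_iff_le, le_sub_iff_add_le', le_div_iff₀ hden]
  exact one_add_div_three_mul_one_sub_rpow_le hr ht0 ht1
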